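/- If two density operators ρ and σ commute, then the measured relative entropy over all POVMs equals the Umegaki relative entropy: D^{ALL}(ρ‖σ) = D(ρ‖σ). -/

import Mathlib

/-!
Commuting `ρ` and `σ` admit a common resolution of the identity by the star projections
`R (x, y) = P_x(ρ) P_y(σ)`, products of spectral projections. Tracing against it turns every
quantity into a classical one: the outcome statistics of a POVM are mixtures of the joint
eigenvalue weights `x · tr R (x, y)` and `y · tr R (x, y)`, so the log-sum inequality bounds every
measured value by the classical relative entropy of these weights, which equals `D(ρ‖σ)` and is
attained by measuring `R` itself. If the support condition fails, some `R k` is annihilated by `σ`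
but not by `ρ`, and two-outcome measurements built from it have unbounded value.
-/

open scoped BigOperators ComplexOrder
noncomputable section

variable {ι : Type*} [Fintype ι] [DecidableEq ι]

def IsDensity (ρ : Matrix ι ι ℂ) : Prop := ρ.PosSemidef ∧ ρ.trace = 1

def mlog (A : Matrix ι ι ℂ) : Matrix ι ι ℂ :=
  if h : A.IsHermitian then h.cfc Real.log else 0

def SuppLE (ρ σ : Matrix ι ι ℂ) : Prop := ∀ v, σ.mulVec v = 0 → ρ.mulVec v = 0

/-- Umegaki relative entropy, `+∞` if the support condition fails. -/
def relEnt (ρ σ : Matrix ι ι ℂ) : EReal :=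
  @ite _ (SuppLE ρ σ) (Classical.propDecidable _)
    (((ρ * (mlog ρ - mlog σ)).trace.re : ℝ) : EReal) ⊤

/-- The classical relative entropy of the outcome statistics of the POVM `E`. -/
def measValue {k : ℕ} (E : Fin k → Matrix ι ι ℂ) (ρ σ : Matrix ι ι ℂ) : ℝ :=
  ∑ x, ((ρ * E x).trace.re) * Real.log (((ρ * E x).trace.re) / ((σ * E x).trace.re))

/-- The measured relative entropy over all finite POVMs. -/
def DmeasAll (ρ σ : Matrix ι ι ℂ) : EReal :=
  ⨆ (k : ℕ) (E : Fin k → Matrix ι ι ℂ) (_ : ∀ x, (E x).PosSemidef) (_ : ∑ x, E x = 1),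
    ((measValue E ρ σ : ℝ) : EReal)

open scoped MatrixOrder
open Finset

namespace Real

lemma sub_le_mul_log_div {y z : ℝ} (hy : 0 ≤ y) (hz : 0 < z) : y - z ≤ y * log (y / z) := by
  calc y - z = z * (y / z - 1) := by field_simp
    _ ≤ z * (y / z * log (y / z)) :=
      mul_le_mul_of_nonneg_left (self_sub_one_le_mul_log (div_nonneg hy hz.le)) hz.le
    _ = y * log (y / z) := by rw [← mul_assoc, mul_div_cancel₀ _ hz.ne']

theorem sum_mul_log_sum_div_sum_le {κ : Type*} (s : Finset κ) {u v : κ → ℝ}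
    (hu : ∀ k ∈ s, 0 ≤ u k) (hv : ∀ k ∈ s, 0 ≤ v k) (huv : ∀ k ∈ s, v k = 0 → u k = 0) :
    (∑ k ∈ s, u k) * log ((∑ k ∈ s, u k) / ∑ k ∈ s, v k) ≤ ∑ k ∈ s, u k * log (u k / v k) := by
  rcases (sum_nonneg hu).eq_or_lt with hU | hU
  · have hu0 := (sum_eq_zero_iff_of_nonneg hu).1 hU.symm
    rw [← hU, zero_mul, sum_eq_zero fun k hk => by rw [hu0 k hk, zero_mul]]
  have hV : 0 < ∑ k ∈ s, v k := by
    refine (sum_nonneg hv).lt_of_ne fun hV => hU.ne' (sum_eq_zero fun k hk => huv k hk ?_)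
    exact (sum_eq_zero_iff_of_nonneg hv).1 hV.symm k hk
  set c := (∑ k ∈ s, u k) / ∑ k ∈ s, v k
  have hc : 0 < c := div_pos hU hV
  have key : ∀ k ∈ s, u k - v k * c ≤ u k * log (u k / v k) - u k * log c := by
    intro k hk
    rcases (hv k hk).eq_or_lt with hvk | hvk
    · simp [huv k hk hvk.symm, ← hvk]
    rcases (hu k hk).eq_or_lt with huk | huk
    · simpa [← huk] using mul_nonneg hvk.le hc.le
    have := sub_le_mul_log_div (hu k hk) (mul_pos hvk hc)
    rwa [← div_div, log_div (div_pos huk hvk).ne' hc.ne', mul_sub] at this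
  have hsum := sum_le_sum key
  rw [sum_sub_distrib, sum_sub_distrib, ← sum_mul, ← sum_mul, mul_div_cancel₀ _ hV.ne'] at hsum
  linarith

lemma mul_log_mul_div_mul_right (a b t : ℝ) :
    a * t * log (a * t / (b * t)) = a * t * log (a / b) := by
  rcases eq_or_ne t 0 with rfl | ht
  · simp
  · rw [mul_div_mul_right _ _ ht]

lemma neg_one_sub_mul_log_le {a b : ℝ} (ha₀ : 0 ≤ a) (ha₁ : a ≤ 1) (hb₀ : 0 < b) (hb₁ : b < 1) :
    -1 - a * log b ≤ a * log (a / b) + (1 - a) * log ((1 - a) / (1 - b)) := by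
  have h₁ : a - 1 - a * log b ≤ a * log (a / b) := by
    rcases ha₀.eq_or_lt with rfl | ha
    · simp
    · rw [log_div ha.ne' hb₀.ne', mul_sub]
      linarith [self_sub_one_le_mul_log ha₀]
  linarith [sub_le_mul_log_div (sub_nonneg.2 ha₁) (sub_pos.2 hb₁)]

end Real

-- Discharges the continuity side goals of the `cfc` lemmas.
@[fun_prop]
lemma Matrix.continuousOn_real_spectrum (A : Matrix ι ι ℂ) (f : ℝ → ℝ) :
    ContinuousOn f (spectrum ℝ A) :=
  A.finite_real_spectrum.continuousOn f

lemma mlog_eq_cfc {A : Matrix ι ι ℂ} (hA : A.IsHermitian) : mlog A = cfc Real.log A := by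
  rw [mlog, dif_pos hA, hA.cfc_eq]

lemma IsStarProjection.trace_mul_nonneg {n : Type*} [Fintype n] {P A : Matrix n n ℂ}
    (hP : IsStarProjection P) (hA : A.PosSemidef) : 0 ≤ (P * A).trace := by
  have h := (hA.mul_mul_conjTranspose_same P).trace_nonneg
  rwa [← Matrix.star_eq_conjTranspose, hP.isSelfAdjoint.star_eq, Matrix.trace_mul_cycle,
    hP.isIdempotentElem.eq] at h

lemma IsStarProjection.trace_re_pos {n : Type*} [Fintype n] {P : Matrix n n ℂ}
    (hP : IsStarProjection P) (hP0 : P ≠ 0) : 0 < P.trace.re := by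
  have hpsd := Matrix.nonneg_iff_posSemidef.1 hP.nonneg
  have hne : P.trace ≠ 0 := fun h => hP0 (hpsd.trace_eq_zero_iff.1 h)
  have hnn := Complex.nonneg_iff.1 hpsd.trace_nonneg
  exact hnn.1.lt_of_ne fun hre => hne (Complex.ext hre.symm hnn.2.symm)

omit [DecidableEq ι] in
lemma SuppLE.mul_eq_zero {ρ σ M : Matrix ι ι ℂ} (h : SuppLE ρ σ) (hM : σ * M = 0) :
    ρ * M = 0 := by
  ext i j
  have hcol : σ.mulVec (fun l => M l j) = 0 := by
    ext i'
    simpa [Matrix.mulVec, dotProduct, Matrix.mul_apply] using congrFun (congrFun hM i') j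
  simpa [Matrix.mulVec, dotProduct, Matrix.mul_apply] using congrFun (h _ hcol) i

def IsPOVM {k : ℕ} (E : Fin k → Matrix ι ι ℂ) : Prop :=
  (∀ x, (E x).PosSemidef) ∧ ∑ x, E x = 1

section DmeasAll

variable {ρ σ : Matrix ι ι ℂ}

lemma le_DmeasAll {n : ℕ} {E : Fin n → Matrix ι ι ℂ} (hE : IsPOVM E) :
    (measValue E ρ σ : EReal) ≤ DmeasAll ρ σ :=
  le_iSup_of_le n <| le_iSup_of_le E <| le_iSup_of_le hE.1 <| le_iSup_of_le hE.2 le_rfl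

lemma DmeasAll_eq_coe {c : ℝ}
    (hle : ∀ (n : ℕ) (E : Fin n → Matrix ι ι ℂ), IsPOVM E → measValue E ρ σ ≤ c)
    (hc : ∃ (n : ℕ) (E : Fin n → Matrix ι ι ℂ), IsPOVM E ∧ measValue E ρ σ = c) :
    DmeasAll ρ σ = c := by
  obtain ⟨n, E, hE, rfl⟩ := hc
  refine le_antisymm ?_ (le_DmeasAll hE)
  exact iSup_le fun n => iSup_le fun E => iSup_le fun hpsd => iSup_le fun hsum =>
    EReal.coe_le_coe_iff.2 (hle n E ⟨hpsd, hsum⟩)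

lemma DmeasAll_eq_top
    (h : ∀ M : ℝ, ∃ (n : ℕ) (E : Fin n → Matrix ι ι ℂ), IsPOVM E ∧ M ≤ measValue E ρ σ) :
    DmeasAll ρ σ = ⊤ := by
  refine (EReal.eq_top_iff_forall_lt _).2 fun y => ?_
  obtain ⟨n, E, hE, hM⟩ := h (y + 1)
  exact (EReal.coe_lt_coe_iff.2 (by linarith)).trans_le (le_DmeasAll hE)

end DmeasAll

def mixedTest (P : Matrix ι ι ℂ) (ε : ℝ) : Fin 2 → Matrix ι ι ℂ :=
  ![ε • 1 + (1 - ε) • P, (1 - ε) • (1 - P)]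

lemma isPOVM_mixedTest {P : Matrix ι ι ℂ} (hP : IsStarProjection P) {ε : ℝ} (hε₀ : 0 ≤ ε)
    (hε₁ : ε ≤ 1) : IsPOVM (mixedTest P ε) := by
  refine ⟨Fin.forall_fin_two.2 ⟨Matrix.nonneg_iff_posSemidef.1 ?_,
    Matrix.nonneg_iff_posSemidef.1 ?_⟩, ?_⟩
  · exact add_nonneg (smul_nonneg hε₀ Matrix.PosSemidef.one.nonneg)
      (smul_nonneg (sub_nonneg.2 hε₁) hP.nonneg)
  · exact smul_nonneg (sub_nonneg.2 hε₁) hP.one_sub_nonneg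
  · simp only [mixedTest, Fin.sum_univ_two, Matrix.cons_val_zero, Matrix.cons_val_one]
    module

lemma measValue_mixedTest {ρ σ P : Matrix ι ι ℂ} (hρ : ρ.trace = 1) (hσ : σ.trace = 1)
    (hσP : σ * P = 0) (ε : ℝ) :
    let a := ε + (1 - ε) * (ρ * P).trace.re
    measValue (mixedTest P ε) ρ σ =
      a * Real.log (a / ε) + (1 - a) * Real.log ((1 - a) / (1 - ε)) := by
  intro a
  have hρE₀ : (ρ * (ε • 1 + (1 - ε) • P)).trace.re = a := by
    simp [mul_add, Matrix.trace_add, Matrix.trace_smul, hρ, a]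
  have hρE₁ : (ρ * ((1 - ε) • (1 - P))).trace.re = 1 - a := by
    simp [mul_sub, Matrix.trace_sub, Matrix.trace_smul, hρ, a]
    ring
  have hσE₀ : (σ * (ε • 1 + (1 - ε) • P)).trace.re = ε := by
    simp [mul_add, Matrix.trace_smul, hσ, hσP]
  have hσE₁ : (σ * ((1 - ε) • (1 - P))).trace.re = 1 - ε := by
    simp [mul_sub, Matrix.trace_smul, hσ, hσP]
  simp only [measValue, mixedTest, Fin.sum_univ_two, Matrix.cons_val_zero, Matrix.cons_val_one,
    Matrix.cons_val_fin_one, hρE₀, hρE₁, hσE₀, hσE₁]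

lemma exists_isPOVM_le_measValue {ρ σ P : Matrix ι ι ℂ} (hρ : IsDensity ρ) (hσ : IsDensity σ)
    (hP : IsStarProjection P) (hσP : σ * P = 0) (hρP : 0 < (ρ * P).trace.re) (M : ℝ) :
    ∃ (n : ℕ) (E : Fin n → Matrix ι ι ℂ), IsPOVM E ∧ M ≤ measValue E ρ σ := by
  set r := (ρ * P).trace.re
  have hr : r ≤ 1 := by
    have h := (Complex.nonneg_iff.1 (hP.one_sub.trace_mul_nonneg hρ.1)).1
    rwa [Matrix.trace_mul_comm, mul_sub, mul_one, Matrix.trace_sub, Complex.sub_re, hρ.2,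
      Complex.one_re, sub_nonneg] at h
  -- The first outcome has probability `ε` under `σ` and at least `r` under `ρ`, so the value is
  -- at least `-1 - r log ε = |M|`.
  set ε := Real.exp (-(|M| + 1) / r)
  have hε₀ : 0 < ε := Real.exp_pos _
  have hε₁ : ε < 1 :=
    Real.exp_lt_one_iff.2 (div_neg_of_neg_of_pos (by linarith [abs_nonneg M]) hρP)
  have hlogε : r * Real.log ε = -(|M| + 1) := by
    rw [Real.log_exp]
    field_simp
  refine ⟨2, mixedTest P ε, isPOVM_mixedTest hP hε₀.le hε₁.le, ?_⟩
  rw [measValue_mixedTest hρ.2 hσ.2 hσP]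
  set a := ε + (1 - ε) * r
  have hra : r ≤ a := by nlinarith
  have ha : a ≤ 1 := by nlinarith
  have hlog : a * Real.log ε ≤ r * Real.log ε :=
    mul_le_mul_of_nonpos_right hra (Real.log_neg hε₀ hε₁).le
  linarith [le_abs_self M, Real.neg_one_sub_mul_log_le (hρP.le.trans hra) ha hε₀ hε₁]

def spectralProj (A : Matrix ι ι ℂ) (x : ℝ) : Matrix ι ι ℂ :=
  cfc (fun y => if y = x then 1 else 0) A

lemma isStarProjection_spectralProj (A : Matrix ι ι ℂ) (x : ℝ) :
    IsStarProjection (spectralProj A x) where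
  isSelfAdjoint := cfc_predicate _ _
  isIdempotentElem := by
    rw [IsIdempotentElem, spectralProj, ← cfc_mul]
    congr with y
    split_ifs <;> simp

lemma spectralProj_mul_cfc (A : Matrix ι ι ℂ) (x : ℝ) (f : ℝ → ℝ) :
    spectralProj A x * cfc f A = f x • spectralProj A x := by
  rw [spectralProj, ← cfc_mul, ← cfc_const_mul]
  congr with y
  split_ifs with h <;> simp [h]

lemma sum_spectralProj {A : Matrix ι ι ℂ} (hA : IsSelfAdjoint A) :
    ∑ x ∈ A.finite_real_spectrum.toFinset, spectralProj A x = 1 := by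
  simp only [spectralProj]
  rw [← cfc_sum, ← cfc_const_one ℝ A]
  refine cfc_congr fun y hy => ?_
  simp [Finset.sum_apply, hy]

/-- `mul_cfc` places `R k` in the eigenspace of `A` for the eigenvalue `a k`. -/
structure IsEigenResolution {κ : Type*} (s : Finset κ) (R : κ → Matrix ι ι ℂ) (a : κ → ℝ)
    (A : Matrix ι ι ℂ) : Prop where
  isStarProjection : ∀ k ∈ s, IsStarProjection (R k)
  sum_eq_one : ∑ k ∈ s, R k = 1
  mul_cfc : ∀ k ∈ s, ∀ f : ℝ → ℝ, R k * cfc f A = f (a k) • R k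

theorem exists_isEigenResolution_of_commute {ρ σ : Matrix ι ι ℂ} (hρ : ρ.PosSemidef)
    (hσ : σ.PosSemidef) (h : Commute ρ σ) :
    ∃ (s : Finset (ℝ × ℝ)) (R : ℝ × ℝ → Matrix ι ι ℂ), IsEigenResolution s R Prod.fst ρ ∧
      IsEigenResolution s R Prod.snd σ ∧ ∀ k ∈ s, 0 ≤ k.1 ∧ 0 ≤ k.2 := by
  have hcomm : ∀ f g : ℝ → ℝ, Commute (cfc f ρ) (cfc g σ) := fun f g =>
    ((h.cfc_real f).symm.cfc_real g).symm
  have hR : ∀ k : ℝ × ℝ, IsStarProjection (spectralProj ρ k.1 * spectralProj σ k.2) := fun k =>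
    (isStarProjection_spectralProj ρ k.1).mul (isStarProjection_spectralProj σ k.2) (hcomm _ _)
  have hsum : ∑ k ∈ ρ.finite_real_spectrum.toFinset ×ˢ σ.finite_real_spectrum.toFinset,
      spectralProj ρ k.1 * spectralProj σ k.2 = 1 := by
    rw [sum_product, ← sum_mul_sum, sum_spectralProj hρ.1.isSelfAdjoint,
      sum_spectralProj hσ.1.isSelfAdjoint, one_mul]
  refine ⟨_, _, ⟨fun k _ => hR k, hsum, fun k _ f => ?_⟩, ⟨fun k _ => hR k, hsum, fun k _ f => ?_⟩,
    fun k hk => ?_⟩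
  · have hQ : Commute (spectralProj σ k.2) (cfc f ρ) := (hcomm f _).symm
    rw [mul_assoc, hQ.eq, ← mul_assoc, spectralProj_mul_cfc, smul_mul_assoc]
  · rw [mul_assoc, spectralProj_mul_cfc, mul_smul_comm]
  · simp only [mem_product, Set.Finite.mem_toFinset] at hk
    exact ⟨spectrum_nonneg_of_nonneg hρ.nonneg hk.1, spectrum_nonneg_of_nonneg hσ.nonneg hk.2⟩

/-- The relative entropy of the joint eigenvalue weights `p k * tr (R k)` and `q k * tr (R k)`. -/
def classicalRelEnt {κ : Type*} (s : Finset κ) (R : κ → Matrix ι ι ℂ) (p q : κ → ℝ) : ℝ :=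
  ∑ k ∈ s, p k * (R k).trace.re * Real.log (p k / q k)

namespace IsEigenResolution

variable {κ : Type*} {s : Finset κ} {R : κ → Matrix ι ι ℂ} {a p q : κ → ℝ} {A ρ σ : Matrix ι ι ℂ}

lemma mul_self (h : IsEigenResolution s R a A) (hA : A.IsHermitian) {k : κ} (hk : k ∈ s) :
    R k * A = a k • R k := by
  simpa only [cfc_id' ℝ A hA.isSelfAdjoint] using h.mul_cfc k hk fun x => x

lemma self_mul (h : IsEigenResolution s R a A) (hA : A.IsHermitian) {k : κ} (hk : k ∈ s) :
    A * R k = a k • R k := by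
  have := congrArg star (h.mul_self hA hk)
  rwa [star_mul, star_smul, star_trivial (a k), hA.isSelfAdjoint.star_eq,
    (h.isStarProjection k hk).isSelfAdjoint.star_eq] at this

lemma trace_mul_re (h : IsEigenResolution s R a A) (hA : A.IsHermitian) (X : Matrix ι ι ℂ) :
    (A * X).trace.re = ∑ k ∈ s, a k * (R k * X).trace.re := by
  calc (A * X).trace.re = (∑ k ∈ s, R k * A * X).trace.re := by
        rw [← sum_mul, ← sum_mul, h.sum_eq_one, one_mul]
    _ = ∑ k ∈ s, a k * (R k * X).trace.re := by
      rw [Matrix.trace_sum, Complex.re_sum]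
      refine sum_congr rfl fun k hk => ?_
      rw [h.mul_self hA hk, smul_mul_assoc, Matrix.trace_smul, Complex.real_smul,
        Complex.re_ofReal_mul]

variable (hρ : IsEigenResolution s R p ρ) (hσ : IsEigenResolution s R q σ)
  (hρh : ρ.IsHermitian) (hσh : σ.IsHermitian)
include hρ hσ hρh hσh

lemma suppLE_iff : SuppLE ρ σ ↔ ∀ k ∈ s, q k = 0 → p k • R k = 0 := by
  constructor
  · intro hsupp k hk hqk
    rw [← hρ.self_mul hρh hk]
    exact hsupp.mul_eq_zero (by rw [hσ.self_mul hσh hk, hqk, zero_smul])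
  · intro hvanish v hv
    rw [← Matrix.one_mulVec v, ← hρ.sum_eq_one, Matrix.mulVec_mulVec, mul_sum, Matrix.sum_mulVec]
    refine sum_eq_zero fun k hk => ?_
    rw [hρ.self_mul hρh hk]
    by_cases hqk : q k = 0
    · rw [hvanish k hk hqk, Matrix.zero_mulVec]
    · have : q k • (R k).mulVec v = 0 := by
        rw [← Matrix.smul_mulVec, ← hσ.mul_self hσh hk, ← Matrix.mulVec_mulVec, hv,
          Matrix.mulVec_zero]
      rw [Matrix.smul_mulVec, (smul_eq_zero.1 this).resolve_left hqk, smul_zero]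

lemma trace_mul_sub_mlog (hsupp : ∀ k ∈ s, q k = 0 → p k • R k = 0) :
    (ρ * (mlog ρ - mlog σ)).trace.re = classicalRelEnt s R p q := by
  rw [hρ.trace_mul_re hρh, classicalRelEnt, mlog_eq_cfc hρh, mlog_eq_cfc hσh]
  refine sum_congr rfl fun k hk => ?_
  rw [mul_sub, hρ.mul_cfc k hk, hσ.mul_cfc k hk, ← sub_smul, Matrix.trace_smul, Complex.real_smul,
    Complex.re_ofReal_mul]
  by_cases hpt : p k * (R k).trace.re = 0
  · rw [← mul_assoc, mul_right_comm, hpt, zero_mul, zero_mul]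
  have hp : p k ≠ 0 := left_ne_zero_of_mul hpt
  have hq : q k ≠ 0 := fun hq => hpt <| by
    simpa [Matrix.trace_smul] using congrArg (fun M => M.trace.re) (hsupp k hk hq)
  rw [Real.log_div hp hq]
  ring

lemma measValue_le (hsupp : ∀ k ∈ s, q k = 0 → p k • R k = 0) (hp : ∀ k ∈ s, 0 ≤ p k)
    (hq : ∀ k ∈ s, 0 ≤ q k) {n : ℕ} {E : Fin n → Matrix ι ι ℂ} (hE : IsPOVM E) :
    measValue E ρ σ ≤ classicalRelEnt s R p q := by
  set t : Fin n → κ → ℝ := fun x k => (R k * E x).trace.re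
  have ht : ∀ x, ∀ k ∈ s, 0 ≤ t x k := fun x k hk =>
    (Complex.nonneg_iff.1 ((hρ.isStarProjection k hk).trace_mul_nonneg (hE.1 x))).1
  have hsum_t : ∀ k, ∑ x, t x k = (R k).trace.re := fun k => by
    rw [← Complex.re_sum, ← Matrix.trace_sum, ← mul_sum, hE.2, mul_one]
  have hvanish : ∀ x, ∀ k ∈ s, q k * t x k = 0 → p k * t x k = 0 := by
    intro x k hk hqt
    rcases mul_eq_zero.1 hqt with hqk | htk
    · simpa [t, Matrix.trace_smul] using
        congrArg (fun M => (M * E x).trace.re) (hsupp k hk hqk)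
    · rw [htk, mul_zero]
  calc measValue E ρ σ = ∑ x, (∑ k ∈ s, p k * t x k) *
        Real.log ((∑ k ∈ s, p k * t x k) / ∑ k ∈ s, q k * t x k) := by
        simp only [measValue, hρ.trace_mul_re hρh, hσ.trace_mul_re hσh, t]
    _ ≤ ∑ x, ∑ k ∈ s, p k * t x k * Real.log (p k * t x k / (q k * t x k)) :=
      sum_le_sum fun x _ => Real.sum_mul_log_sum_div_sum_le s
        (fun k hk => mul_nonneg (hp k hk) (ht x k hk))
        (fun k hk => mul_nonneg (hq k hk) (ht x k hk)) (hvanish x)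
    _ = classicalRelEnt s R p q := by
      simp only [Real.mul_log_mul_div_mul_right, classicalRelEnt]
      rw [sum_comm]
      refine sum_congr rfl fun k _ => ?_
      rw [← sum_mul, ← mul_sum, hsum_t]

lemma exists_isPOVM_measValue_eq :
    ∃ (n : ℕ) (E : Fin n → Matrix ι ι ℂ), IsPOVM E ∧ measValue E ρ σ = classicalRelEnt s R p q := by
  refine ⟨s.card, fun x => R (s.equivFin.symm x), ⟨fun x => ?_, ?_⟩, ?_⟩
  · exact Matrix.nonneg_iff_posSemidef.1 (hρ.isStarProjection _ (coe_mem _)).nonneg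
  · rw [Equiv.sum_comp s.equivFin.symm (fun k : s => R k), sum_coe_sort, hρ.sum_eq_one]
  · rw [measValue, classicalRelEnt, Equiv.sum_comp s.equivFin.symm (fun k : s =>
      (ρ * R k).trace.re * Real.log ((ρ * R k).trace.re / (σ * R k).trace.re)), ← sum_coe_sort s]
    refine sum_congr rfl fun k _ => ?_
    rw [hρ.self_mul hρh k.2, hσ.self_mul hσh k.2, Matrix.trace_smul, Matrix.trace_smul,
      Complex.real_smul, Complex.real_smul, Complex.re_ofReal_mul, Complex.re_ofReal_mul,
      Real.mul_log_mul_div_mul_right]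

lemma exists_isStarProjection_of_not_suppLE (hp : ∀ k ∈ s, 0 ≤ p k) (hsupp : ¬ SuppLE ρ σ) :
    ∃ P : Matrix ι ι ℂ, IsStarProjection P ∧ σ * P = 0 ∧ 0 < (ρ * P).trace.re := by
  obtain ⟨k, hk, hqk, hpR⟩ : ∃ k ∈ s, q k = 0 ∧ p k • R k ≠ 0 := by
    simpa [hρ.suppLE_iff hσ hρh hσh] using hsupp
  have hpk : 0 < p k := (hp k hk).lt_of_ne' fun h => hpR (by rw [h, zero_smul])
  refine ⟨R k, hρ.isStarProjection k hk, by rw [hσ.self_mul hσh hk, hqk, zero_smul], ?_⟩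
  rw [hρ.self_mul hρh hk, Matrix.trace_smul, Complex.real_smul, Complex.re_ofReal_mul]
  exact mul_pos hpk ((hρ.isStarProjection k hk).trace_re_pos fun h => hpR (by rw [h, smul_zero]))

end IsEigenResolution

/-- If two density operators commute, the measured relative entropy over
all POVMs equals the Umegaki relative entropy: `D^{ALL}(ρ‖σ) = D(ρ‖σ)`. -/
theorem DmeasAll_eq_relEnt_of_commute (ρ σ : Matrix ι ι ℂ)
    (hρ : IsDensity ρ) (hσ : IsDensity σ) (hcomm : Commute ρ σ) :
    DmeasAll ρ σ = relEnt ρ σ := by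
  obtain ⟨s, R, hRρ, hRσ, hnonneg⟩ := exists_isEigenResolution_of_commute hρ.1 hσ.1 hcomm
  have hρh := hρ.1.isHermitian
  have hσh := hσ.1.isHermitian
  by_cases hsupp : SuppLE ρ σ
  · have hvanish := (hRρ.suppLE_iff hRσ hρh hσh).1 hsupp
    rw [relEnt, if_pos hsupp, hRρ.trace_mul_sub_mlog hRσ hρh hσh hvanish]
    exact DmeasAll_eq_coe
      (fun _ _ => hRρ.measValue_le hRσ hρh hσh hvanish (fun k hk => (hnonneg k hk).1)
        (fun k hk => (hnonneg k hk).2))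
      (hRρ.exists_isPOVM_measValue_eq hRσ hρh hσh)
  · rw [relEnt, if_neg hsupp]
    obtain ⟨P, hP, hσP, hρP⟩ := hRρ.exists_isStarProjection_of_not_suppLE hRσ hρh hσh
      (fun k hk => (hnonneg k hk).1) hsupp
    exact DmeasAll_eq_top (exists_isPOVM_le_measValue hρ hσ hP hσP hρP)
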